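/- Let L(x,u,u₁) be a first-order Lagrangian in one variable and α(x,u,u₁) a differential function with X_α L = D_x M for some differential function M (variational symmetry). Then D_x(M − α·L_{u₁}) = α·E(L) identically in jet coordinates; in particular, on solutions of E(L) = 0, the quantity M − α·L_{u₁} is conserved (D_x(M − α·L_{u₁}) = 0). -/

import Mathlib

/-- Partial derivative of a differential function with respect to the k-th jet
    coordinate u_k. -/
noncomputable def pj (F : ℝ → (ℕ → ℝ) → ℝ) (k : ℕ) : ℝ → (ℕ → ℝ) → ℝ :=
  fun x U => deriv (fun s => F x (Function.update U k s)) (U k)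

/-- Total x-derivative on jet space:
    D_x F = ∂F/∂x + Σ_k u_{k+1}·∂F/∂u_k. -/
noncomputable def DX (F : ℝ → (ℕ → ℝ) → ℝ) : ℝ → (ℕ → ℝ) → ℝ :=
  fun x U => deriv (fun s => F s U) x + ∑' k : ℕ, U (k + 1) * pj F k x U

def NiceB (n : ℕ) (F : ℝ → (ℕ → ℝ) → ℝ) : Prop :=
  ∃ G : ℝ × (Fin n → ℝ) → ℝ, ContDiff ℝ (⊤ : ℕ∞) G ∧ ∀ x U, F x U = G (x, fun i => U i)

set_option linter.unnecessarySimpa false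

lemma NiceB.diff_slot {n : ℕ} {F : ℝ → (ℕ → ℝ) → ℝ} (h : NiceB n F)
    (x : ℝ) (U : ℕ → ℝ) (k : ℕ) (t : ℝ) :
    DifferentiableAt ℝ (fun s => F x (Function.update U k s)) t := by
  obtain ⟨G, hG, hFG⟩ := h
  have he : (fun s => F x (Function.update U k s))
      = fun s => G (x, fun i : Fin n => if (i : ℕ) = k then s else U i) := by
    funext s; rw [hFG]; congr 1
    simp only [Prod.mk.injEq, true_and]
    funext i; simp [Function.update_apply]
  rw [he]
  have hm : DifferentiableAt ℝ
      (fun s : ℝ => ((x, fun i : Fin n => if (i : ℕ) = k then s else U i) : ℝ × (Fin n → ℝ))) t := by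
    apply DifferentiableAt.prodMk (differentiableAt_const _)
    apply differentiableAt_pi.mpr
    intro i
    by_cases hik : (i : ℕ) = k
    · simpa [hik] using differentiableAt_fun_id
    · simpa [hik] using differentiableAt_const (U i)
  exact DifferentiableAt.comp t ((hG.differentiable (by simp)).differentiableAt) hm

lemma NiceB.diff_x {n : ℕ} {F : ℝ → (ℕ → ℝ) → ℝ} (h : NiceB n F)
    (U : ℕ → ℝ) (t : ℝ) : DifferentiableAt ℝ (fun s => F s U) t := by
  obtain ⟨G, hG, hFG⟩ := h
  have he : (fun s => F s U) = fun s => G (s, fun i : Fin n => U i) := by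
    funext s; rw [hFG]
  rw [he]
  exact DifferentiableAt.comp t ((hG.differentiable (by simp)).differentiableAt)
    (differentiableAt_fun_id.prodMk (differentiableAt_const _))

lemma NiceB.pj_zero {n : ℕ} {F : ℝ → (ℕ → ℝ) → ℝ} (h : NiceB n F)
    {k : ℕ} (hk : n ≤ k) (x : ℝ) (U : ℕ → ℝ) : pj F k x U = 0 := by
  obtain ⟨G, hG, hFG⟩ := h
  have he : (fun s => F x (Function.update U k s)) = fun _ => G (x, fun i : Fin n => U i) := by
    funext s; rw [hFG]; congr 1
    simp only [Prod.mk.injEq, true_and]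
    funext i
    have : (i : ℕ) ≠ k := by have := i.isLt; omega
    simp [Function.update_apply, this]
  simp [pj, he]

lemma nice_of_L {L : ℝ → (ℕ → ℝ) → ℝ} (G : ℝ × ℝ × ℝ → ℝ) (hG : ContDiff ℝ (⊤ : ℕ∞) G)
    (hLG0 : ∀ (x : ℝ) (U : ℕ → ℝ), L x U = G (x, U 0, U 1)) : NiceB 2 L := by
  refine ⟨fun p => G (p.1, p.2 0, p.2 1), ?_, fun x U => by simp [hLG0]⟩
  exact hG.comp (contDiff_fst.prodMk
    (((ContinuousLinearMap.proj (R := ℝ) (φ := fun _ : Fin 2 => ℝ) 0).contDiff.comp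
        contDiff_snd).prodMk
      ((ContinuousLinearMap.proj (R := ℝ) (φ := fun _ : Fin 2 => ℝ) 1).contDiff.comp
        contDiff_snd)))

lemma nice_pjL1 {L : ℝ → (ℕ → ℝ) → ℝ} (G : ℝ × ℝ × ℝ → ℝ) (hG : ContDiff ℝ (⊤ : ℕ∞) G)
    (hLG0 : ∀ (x : ℝ) (U : ℕ → ℝ), L x U = G (x, U 0, U 1)) : NiceB 2 (pj L 1) := by
  refine ⟨fun p => fderiv ℝ G (p.1, p.2 0, p.2 1) (0, 0, 1), ?_, ?_⟩
  · have h1 : ContDiff ℝ (⊤ : ℕ∞) (fun p : ℝ × (Fin 2 → ℝ) => ((p.1, p.2 0, p.2 1) : ℝ × ℝ × ℝ)) :=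
      contDiff_fst.prodMk
        (((ContinuousLinearMap.proj (R := ℝ) (φ := fun _ : Fin 2 => ℝ) 0).contDiff.comp
            contDiff_snd).prodMk
          ((ContinuousLinearMap.proj (R := ℝ) (φ := fun _ : Fin 2 => ℝ) 1).contDiff.comp
            contDiff_snd))
    exact ((hG.fderiv_right (by simp)).comp h1).clm_apply contDiff_const
  · intro x U
    have he : (fun s => L x (Function.update U 1 s)) = fun s => G (x, U 0, s) := by
      funext s; rw [hLG0]; simp [Function.update_apply]
    have hd : HasDerivAt (fun s : ℝ => ((x, U 0, s) : ℝ × ℝ × ℝ)) ((0, 0, 1) : ℝ × ℝ × ℝ) (U 1) :=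
      (hasDerivAt_const _ x).prodMk ((hasDerivAt_const _ (U 0)).prodMk (hasDerivAt_id _))
    have := ((hG.differentiable (by simp) (x, U 0, U 1)).hasFDerivAt.comp_hasDerivAt (U 1) hd).deriv
    simp only [pj, he]
    exact this

/-- one-dimensional First Noether Theorem. If X_α L = D_x M
    (variational symmetry) for a first-order Lagrangian L = L(x,u,u₁), where
    X_α = α·∂_u + (D_x α)·∂_{u₁} and E(L) = L_u − D_x(L_{u₁}), then
    D_x(M − α·L_{u₁}) = α·E(L) identically; in particular, at points where
    E(L) = 0, we have D_x(M − α·L_{u₁}) = 0. -/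
theorem stmt_16 (L α M : ℝ → (ℕ → ℝ) → ℝ)
    (hL : ∃ G : ℝ × ℝ × ℝ → ℝ, ContDiff ℝ (⊤ : ℕ∞) G ∧
      ∀ (x : ℝ) (U : ℕ → ℝ), L x U = G (x, U 0, U 1))
    (hα : ∃ (n : ℕ) (G : ℝ × (Fin n → ℝ) → ℝ), ContDiff ℝ (⊤ : ℕ∞) G ∧
      ∀ (x : ℝ) (U : ℕ → ℝ), α x U = G (x, fun i => U i))
    (hM : ∃ (n : ℕ) (G : ℝ × (Fin n → ℝ) → ℝ), ContDiff ℝ (⊤ : ℕ∞) G ∧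
      ∀ (x : ℝ) (U : ℕ → ℝ), M x U = G (x, fun i => U i))
    (hsym : ∀ (x : ℝ) (U : ℕ → ℝ),
      α x U * pj L 0 x U + DX α x U * pj L 1 x U = DX M x U) :
    ∀ (x : ℝ) (U : ℕ → ℝ),
      DX (fun x U => M x U - α x U * pj L 1 x U) x U
          = α x U * (pj L 0 x U - DX (pj L 1) x U) ∧
      (pj L 0 x U - DX (pj L 1) x U = 0 →
        DX (fun x U => M x U - α x U * pj L 1 x U) x U = 0) := by
  obtain ⟨G0, hG0, hLG0⟩ := hL
  obtain ⟨na, Ga, hGa, hαG⟩ := hα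
  obtain ⟨nm, Gm, hGm, hMG⟩ := hM
  have hQ : NiceB 2 (pj L 1) := nice_pjL1 G0 hG0 hLG0
  have hA : NiceB na α := ⟨Ga, hGa, hαG⟩
  have hm : NiceB nm M := ⟨Gm, hGm, hMG⟩
  set N := max (max na nm) 2 with hN
  intro x U
  -- pointwise Leibniz for pj of the combined function
  have hpjP : ∀ k, pj (fun x U => M x U - α x U * pj L 1 x U) k x U
      = pj M k x U - (pj α k x U * pj L 1 x U + α x U * pj (pj L 1) k x U) := by
    intro k
    have h1 := hm.diff_slot x U k (U k)
    have h2 := hA.diff_slot x U k (U k)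
    have h3 := hQ.diff_slot x U k (U k)
    show deriv (fun s => M x (Function.update U k s)
        - α x (Function.update U k s) * pj L 1 x (Function.update U k s)) (U k)
      = pj M k x U - (pj α k x U * pj L 1 x U + α x U * pj (pj L 1) k x U)
    rw [deriv_fun_sub h1 (h2.fun_mul h3), deriv_fun_mul h2 h3]
    simp only [Function.update_eq_self, pj]
  -- deriv in x of the combined function
  have hdP : deriv (fun s => M s U - α s U * pj L 1 s U) x
      = deriv (fun s => M s U) x - (deriv (fun s => α s U) x * pj L 1 x U
          + α x U * deriv (fun s => pj L 1 s U) x) := by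
    have h1 := hm.diff_x U x
    have h2 := hA.diff_x U x
    have h3 := hQ.diff_x U x
    rw [deriv_fun_sub h1 (h2.fun_mul h3), deriv_fun_mul h2 h3]
  -- finite-sum versions of the tsums
  have hvM : ∀ k ∉ Finset.range N, U (k + 1) * pj M k x U = 0 := by
    intro k hk
    have hk' : N ≤ k := le_of_not_gt (fun h => hk (Finset.mem_range.mpr h))
    rw [hm.pj_zero (by omega) x U]; ring
  have hvA : ∀ k ∉ Finset.range N, U (k + 1) * pj α k x U = 0 := by
    intro k hk
    have hk' : N ≤ k := le_of_not_gt (fun h => hk (Finset.mem_range.mpr h))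
    rw [hA.pj_zero (by omega) x U]; ring
  have hvQ : ∀ k ∉ Finset.range N, U (k + 1) * pj (pj L 1) k x U = 0 := by
    intro k hk
    have hk' : N ≤ k := le_of_not_gt (fun h => hk (Finset.mem_range.mpr h))
    rw [hQ.pj_zero (by omega) x U]; ring
  have tM : ∑' k, U (k + 1) * pj M k x U = ∑ k ∈ Finset.range N, U (k + 1) * pj M k x U :=
    tsum_eq_sum hvM
  have tA : ∑' k, U (k + 1) * pj α k x U = ∑ k ∈ Finset.range N, U (k + 1) * pj α k x U :=
    tsum_eq_sum hvA
  have tQ : ∑' k, U (k + 1) * pj (pj L 1) k x U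
      = ∑ k ∈ Finset.range N, U (k + 1) * pj (pj L 1) k x U := tsum_eq_sum hvQ
  have tP : ∑' k, U (k + 1) * pj (fun x U => M x U - α x U * pj L 1 x U) k x U
      = ∑ k ∈ Finset.range N, U (k + 1) * pj (fun x U => M x U - α x U * pj L 1 x U) k x U := by
    apply tsum_eq_sum
    intro k hk
    have hk' : N ≤ k := le_of_not_gt (fun h => hk (Finset.mem_range.mpr h))
    rw [hpjP k, hm.pj_zero (by omega) x U, hA.pj_zero (by omega) x U,
      hQ.pj_zero (by omega) x U]
    ring
  have hsplit : ∑ k ∈ Finset.range N, U (k + 1)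
        * pj (fun x U => M x U - α x U * pj L 1 x U) k x U
      = (∑ k ∈ Finset.range N, U (k + 1) * pj M k x U)
        - ((∑ k ∈ Finset.range N, U (k + 1) * pj α k x U) * pj L 1 x U
          + α x U * ∑ k ∈ Finset.range N, U (k + 1) * pj (pj L 1) k x U) := by
    rw [Finset.sum_mul, Finset.mul_sum, ← Finset.sum_add_distrib, ← Finset.sum_sub_distrib]
    apply Finset.sum_congr rfl
    intro k _
    rw [hpjP k]; ring
  have hmain : DX (fun x U => M x U - α x U * pj L 1 x U) x U
      = α x U * (pj L 0 x U - DX (pj L 1) x U) := by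
    have hsym' := hsym x U
    simp only [DX] at hsym' ⊢
    rw [tM, tA] at hsym'
    rw [tP, tQ, hsplit, hdP]
    linarith [hsym']
  exact ⟨hmain, fun h => by rw [hmain, h, mul_zero]⟩
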